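/- Let L1, L2, L3 be concurrent non-coplanar lines through a point p, and let L4 be a line not containing p. Then the Plücker vectors of L1, L2, L3, L4 are linearly independent, and a line L depends linearly on them if and only if L contains p or L lies in the plane determined by L4 and p. -/

import Mathlib

/-!
Let `P` be the bilinear form on `ℝ⁶` with `P (a ∧ b) (c ∧ d) = det (a, b, c, d)`. Each generator
`p ∧ qᵢ`, `r ∧ s` is `P`-orthogonal to `r ∧ p` and `s ∧ p`, so if `u ∧ v` lies in their span then
`r, p, u, v` and `s, p, u, v` are dependent; unless `p ∈ ⟨u, v⟩`, this puts `r` and `s` in the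
3-space `⟨p, u, v⟩`, which is then the plane `⟨r, s, p⟩`. Conversely the `p ∧ qᵢ` span all of
`p ∧ ℝ⁴`, which contains every line through `p` and, together with `r ∧ s`, every line of the
plane. For independence, pairing with `x ∧ p` for `x` off the plane isolates the coefficient of
`r ∧ s`, and pairing with `qⱼ ∧ qₖ` isolates that of `p ∧ qᵢ`.
-/

def plucker (p q : Fin 4 → ℝ) : Fin 6 → ℝ :=
  ![p 0 * q 1 - p 1 * q 0, p 0 * q 2 - p 2 * q 0, p 0 * q 3 - p 3 * q 0,
    p 1 * q 2 - p 2 * q 1, p 1 * q 3 - p 3 * q 1, p 2 * q 3 - p 3 * q 2]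

open Submodule

lemma range_vecCons_three {α : Type*} (a b c : α) : Set.range ![a, b, c] = {a, b, c} := by
  rw [Matrix.range_cons, Matrix.range_cons_cons_empty, Set.singleton_union]

section LinearAlgebra

variable {K V : Type*} [Field K] [AddCommGroup V] [Module K V]

lemma det_of_ne_zero_iff_linearIndependent {n : ℕ} (v : Fin n → Fin n → K) :
    (Matrix.of v).det ≠ 0 ↔ LinearIndependent K v := by
  rw [← isUnit_iff_ne_zero, ← Matrix.isUnit_iff_isUnit_det,
    ← Matrix.linearIndependent_rows_iff_isUnit]
  rfl

lemma det_of_ne_zero_of_span_range_eq_top {n : ℕ} {v : Fin n → Fin n → K}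
    (hv : span K (Set.range v) = ⊤) : (Matrix.of v).det ≠ 0 :=
  (det_of_ne_zero_iff_linearIndependent v).2
    (linearIndependent_of_top_le_span_of_card_eq_finrank hv.ge (by simp))

lemma mem_span_pair_or_span_pair_le {p r s u v : V} (hprs : LinearIndependent K ![p, r, s])
    (huv : LinearIndependent K ![u, v]) (hr : ¬LinearIndependent K ![r, p, u, v])
    (hs : ¬LinearIndependent K ![s, p, u, v]) :
    p ∈ span K {u, v} ∨ span K {u, v} ≤ span K {r, s, p} := by
  by_cases hp : p ∈ span K {u, v}
  · exact Or.inl hp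
  right
  have hpuv : LinearIndependent K ![p, u, v] :=
    linearIndependent_finCons.2 ⟨huv, by rwa [Matrix.range_cons_cons_empty]⟩
  have mem_of_not_linearIndependent {a : V} (ha : ¬LinearIndependent K ![a, p, u, v]) :
      a ∈ span K (Set.range ![p, u, v]) :=
    not_not.1 fun h => ha (linearIndependent_finCons.2 ⟨hpuv, h⟩)
  have hle : span K (Set.range ![p, r, s]) ≤ span K (Set.range ![p, u, v]) := by
    rw [span_le, Set.range_subset_iff]
    intro i
    fin_cases i
    exacts [subset_span (Set.mem_range_self 0), mem_of_not_linearIndependent hr,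
      mem_of_not_linearIndependent hs]
  have := FiniteDimensional.span_of_finite K (Set.finite_range ![p, u, v])
  have heq := eq_of_le_of_finrank_eq hle
    (by rw [finrank_span_eq_card hprs, finrank_span_eq_card hpuv])
  rw [range_vecCons_three, range_vecCons_three] at heq
  calc span K {u, v} ≤ span K {p, u, v} := span_mono (Set.subset_insert _ _)
    _ = span K {r, s, p} := by rw [← heq, Set.insert_comm, Set.pair_comm]

end LinearAlgebra

@[simp]
lemma plucker_self (x : Fin 4 → ℝ) : plucker x x = 0 := by
  ext i; fin_cases i <;> simp [plucker] <;> ring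

lemma plucker_anticomm (x y : Fin 4 → ℝ) : -plucker x y = plucker y x := by
  ext i; fin_cases i <;> simp [plucker] <;> ring

def pluckerBilin : (Fin 4 → ℝ) →ₗ[ℝ] (Fin 4 → ℝ) →ₗ[ℝ] Fin 6 → ℝ :=
  LinearMap.mk₂ ℝ plucker
    (fun _ _ _ => by ext i; fin_cases i <;> simp [plucker] <;> ring)
    (fun _ _ _ => by ext i; fin_cases i <;> simp [plucker] <;> ring)
    (fun _ _ _ => by ext i; fin_cases i <;> simp [plucker] <;> ring)
    (fun _ _ _ => by ext i; fin_cases i <;> simp [plucker] <;> ring)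

@[simp]
lemma pluckerBilin_apply (x y : Fin 4 → ℝ) : pluckerBilin x y = plucker x y := rfl

lemma plucker_mem_span_image2 {S : Set (Fin 4 → ℝ)} {u v : Fin 4 → ℝ} (hu : u ∈ span ℝ S)
    (hv : v ∈ span ℝ S) : plucker u v ∈ span ℝ (Set.image2 plucker S S) := by
  have h := apply_mem_map₂ pluckerBilin hu hv
  rwa [map₂_span_span] at h

lemma plucker_mem_span_image_of_span_eq_top {S : Set (Fin 4 → ℝ)} (hS : span ℝ S = ⊤)
    (p x : Fin 4 → ℝ) : plucker p x ∈ span ℝ (plucker p '' S) := by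
  have h := mem_map_of_mem (f := pluckerBilin p) (hS ▸ mem_top : x ∈ span ℝ S)
  rwa [map_span] at h

lemma exists_plucker_eq_of_mem_span_pair {p u v : Fin 4 → ℝ} (hp : p ≠ 0)
    (h : p ∈ span ℝ {u, v}) : ∃ x, plucker u v = plucker p x := by
  obtain ⟨a, b, rfl⟩ := mem_span_pair.1 h
  by_cases ha : a = 0
  · have hb : b ≠ 0 := by rintro rfl; simp [ha] at hp
    refine ⟨-b⁻¹ • u, ?_⟩
    rw [← pluckerBilin_apply (a • u + b • v)]
    simp only [map_add, map_smul, LinearMap.add_apply, LinearMap.smul_apply, pluckerBilin_apply]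
    rw [← plucker_anticomm v u]
    simp [ha, hb, smul_smul]
  · refine ⟨a⁻¹ • v, ?_⟩
    rw [← pluckerBilin_apply (a • u + b • v)]
    simp only [map_add, map_smul, LinearMap.add_apply, LinearMap.smul_apply, pluckerBilin_apply]
    simp [ha, smul_smul]

-- The polar form of the Klein quadric.
def pluckerPairing : (Fin 6 → ℝ) →ₗ[ℝ] (Fin 6 → ℝ) →ₗ[ℝ] ℝ :=
  LinearMap.mk₂ ℝ
    (fun ω η => ω 0 * η 5 - ω 1 * η 4 + ω 2 * η 3 + ω 3 * η 2 - ω 4 * η 1 + ω 5 * η 0)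
    (fun _ _ _ => by simp; ring) (fun _ _ _ => by simp; ring)
    (fun _ _ _ => by simp; ring) (fun _ _ _ => by simp; ring)

lemma pluckerPairing_plucker_plucker (a b c d : Fin 4 → ℝ) :
    pluckerPairing (plucker a b) (plucker c d) = (Matrix.of ![a, b, c, d]).det := by
  rw [Matrix.det_succ_row_zero]
  simp [pluckerPairing, plucker, Fin.sum_univ_succ, Matrix.det_fin_three, Fin.succAbove]
  ring

lemma pluckerPairing_plucker_eq_zero {a b c d : Fin 4 → ℝ} (h : a = c ∨ a = d ∨ b = c ∨ b = d) :
    pluckerPairing (plucker a b) (plucker c d) = 0 := by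
  rcases h with rfl | rfl | rfl | rfl <;> simp [pluckerPairing, plucker] <;> ring

section ThreeConcurrentPlusOne

variable {p r s : Fin 4 → ℝ} {q : Fin 3 → Fin 4 → ℝ}

local notation "W" => span ℝ {plucker p (q 0), plucker p (q 1), plucker p (q 2), plucker r s}

lemma plucker_left_mem_span (hncop : span ℝ {p, q 0, q 1, q 2} = ⊤) (x : Fin 4 → ℝ) :
    plucker p x ∈ W := by
  refine span_le.2 ?_ (plucker_mem_span_image_of_span_eq_top hncop p x)
  rintro _ ⟨y, hy, rfl⟩
  rcases hy with rfl | rfl | rfl | rfl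
  · simp
  all_goals exact subset_span (by simp)

lemma plucker_mem_span_of_span_pair_le (hncop : span ℝ {p, q 0, q 1, q 2} = ⊤)
    {u v : Fin 4 → ℝ} (h : span ℝ {u, v} ≤ span ℝ {r, s, p}) : plucker u v ∈ W := by
  have hu : u ∈ span ℝ {r, s, p} := h (subset_span (by simp))
  have hv : v ∈ span ℝ {r, s, p} := h (subset_span (by simp))
  refine span_le.2 ?_ (plucker_mem_span_image2 hu hv)
  rintro _ ⟨a, ha, b, hb, rfl⟩
  have hleft := plucker_left_mem_span (r := r) (s := s) hncop
  have hrs : plucker r s ∈ W := subset_span (by simp)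
  have hswap {x y : Fin 4 → ℝ} (h : plucker x y ∈ W) : plucker y x ∈ W := by
    rw [← plucker_anticomm x y]
    exact neg_mem h
  rcases ha with rfl | rfl | rfl <;> rcases hb with rfl | rfl | rfl
  all_goals first
    | (rw [plucker_self]; exact zero_mem _)
    | exact hrs
    | exact hleft _
    | exact hswap hrs
    | exact hswap (hleft _)

lemma plucker_mem_span_of_mem_span_pair (hncop : span ℝ {p, q 0, q 1, q 2} = ⊤) (hp : p ≠ 0)
    {u v : Fin 4 → ℝ} (h : p ∈ span ℝ {u, v}) : plucker u v ∈ W := by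
  obtain ⟨x, hx⟩ := exists_plucker_eq_of_mem_span_pair hp h
  exact hx ▸ plucker_left_mem_span hncop x

lemma pluckerPairing_eq_zero_of_mem_span {a : Fin 4 → ℝ} (ha : a = r ∨ a = s) {ω : Fin 6 → ℝ}
    (hω : ω ∈ W) : pluckerPairing (plucker a p) ω = 0 := by
  suffices W ≤ LinearMap.ker (pluckerPairing (plucker a p)) from this hω
  rw [span_le]
  rintro _ (rfl | rfl | rfl | rfl) <;>
    exact pluckerPairing_plucker_eq_zero (by rcases ha with rfl | rfl <;> simp)

lemma linearIndependent_pluckers (hncop : span ℝ {p, q 0, q 1, q 2} = ⊤)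
    (hprs : LinearIndependent ℝ ![p, r, s]) :
    LinearIndependent ℝ
      ![plucker p (q 0), plucker p (q 1), plucker p (q 2), plucker r s] := by
  obtain ⟨x, hx⟩ := exists_linearIndependent_cons_of_lt_finrank hprs (by simp)
  have hdet_q (a b c d : Fin 4 → ℝ) (h : ({a, b, c, d} : Set _) = {p, q 0, q 1, q 2}) :
      (Matrix.of ![a, b, c, d]).det ≠ 0 := by
    refine det_of_ne_zero_of_span_range_eq_top ?_
    rw [Matrix.range_cons, range_vecCons_three, Set.singleton_union, h, hncop]
  rw [Fintype.linearIndependent_iff]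
  intro g hg
  simp only [Fin.sum_univ_four, Matrix.cons_val] at hg
  have key (a b : Fin 4 → ℝ) := congrArg (pluckerPairing (plucker a b)) hg
  simp only [map_add, map_smul, map_zero, smul_eq_mul] at key
  have h3 : g 3 = 0 := by
    simpa [pluckerPairing_plucker_eq_zero, pluckerPairing_plucker_plucker,
      (det_of_ne_zero_iff_linearIndependent ![x, p, r, s]).2 hx] using key x p
  have h0 : g 0 = 0 := by
    simpa [pluckerPairing_plucker_eq_zero, pluckerPairing_plucker_plucker, h3,
      hdet_q (q 1) (q 2) p (q 0) (by ext; simp; tauto)] using key (q 1) (q 2)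
  have h1 : g 1 = 0 := by
    simpa [pluckerPairing_plucker_eq_zero, pluckerPairing_plucker_plucker, h3, h0,
      hdet_q (q 2) (q 0) p (q 1) (by ext; simp; tauto)] using key (q 2) (q 0)
  have h2 : g 2 = 0 := by
    simpa [pluckerPairing_plucker_eq_zero, pluckerPairing_plucker_plucker, h3, h0, h1,
      hdet_q (q 0) (q 1) p (q 2) (by ext; simp; tauto)] using key (q 0) (q 1)
  intro i
  fin_cases i
  exacts [h0, h1, h2, h3]

end ThreeConcurrentPlusOne

theorem three_concurrent_plus_one_general (p : Fin 4 → ℝ) (q : Fin 3 → (Fin 4 → ℝ))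
    (r s : Fin 4 → ℝ)
    (hncop : Submodule.span ℝ {p, q 0, q 1, q 2} = ⊤)
    (hrs : LinearIndependent ℝ ![r, s])
    (hp4 : p ∉ Submodule.span ℝ {r, s}) :
    LinearIndependent ℝ
      ![plucker p (q 0), plucker p (q 1), plucker p (q 2), plucker r s] ∧
    ∀ u v : Fin 4 → ℝ, LinearIndependent ℝ ![u, v] →
      (plucker u v ∈ Submodule.span ℝ
          {plucker p (q 0), plucker p (q 1), plucker p (q 2), plucker r s} ↔
        (p ∈ Submodule.span ℝ {u, v} ∨
          Submodule.span ℝ {u, v} ≤ Submodule.span ℝ {r, s, p})) := by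
  have hp : p ≠ 0 := fun h => hp4 (h ▸ zero_mem _)
  have hprs : LinearIndependent ℝ ![p, r, s] :=
    linearIndependent_finCons.2 ⟨hrs, by rwa [Matrix.range_cons_cons_empty]⟩
  refine ⟨linearIndependent_pluckers hncop hprs, fun u v huv => ⟨fun h => ?_, ?_⟩⟩
  · have hdep (a : Fin 4 → ℝ) (ha : a = r ∨ a = s) : ¬LinearIndependent ℝ ![a, p, u, v] := by
      rw [← det_of_ne_zero_iff_linearIndependent, not_not, ← pluckerPairing_plucker_plucker]
      exact pluckerPairing_eq_zero_of_mem_span ha h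
    exact mem_span_pair_or_span_pair_le hprs huv (hdep r (.inl rfl)) (hdep s (.inr rfl))
  · rintro (h | h)
    exacts [plucker_mem_span_of_mem_span_pair hncop hp h,
      plucker_mem_span_of_span_pair_le hncop h]

theorem three_concurrent_plus_one (p : Fin 4 → ℝ) (q : Fin 3 → (Fin 4 → ℝ))
    (r s : Fin 4 → ℝ)
    (hli : ∀ i, LinearIndependent ℝ ![p, q i])
    (hncop : Submodule.span ℝ {p, q 0, q 1, q 2} = ⊤)
    (hrs : LinearIndependent ℝ ![r, s])
    (hp4 : p ∉ Submodule.span ℝ {r, s}) :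
    LinearIndependent ℝ
      ![plucker p (q 0), plucker p (q 1), plucker p (q 2), plucker r s] ∧
    ∀ u v : Fin 4 → ℝ, LinearIndependent ℝ ![u, v] →
      (plucker u v ∈ Submodule.span ℝ
          {plucker p (q 0), plucker p (q 1), plucker p (q 2), plucker r s} ↔
        (p ∈ Submodule.span ℝ {u, v} ∨
          Submodule.span ℝ {u, v} ≤ Submodule.span ℝ {r, s, p})) :=
  three_concurrent_plus_one_general p q r s hncop hrs hp4
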